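/- arXiv:2510.11296 — 2 statements merged into one kernel-verified Lean document; each statement's English description precedes it below -/
import Mathlib

section
/- For every b > 0, the function h(s) = log((e^s + b)/(1 + b)) − e^s/(e^s + b) is strictly monotonically increasing on ℝ. Consequently, for any s_OOD < s_ID, the gap f(s_ID) − f(s_OOD) under the ΔEnergy score f(s) = log((e^s + b)/(1+b)) strictly exceeds the gap g(s_ID) − g(s_OOD) under the MCM score g(s) = e^s/(e^s + b). -/
/-! With `g` the MCM score, the ΔEnergy score `f` satisfies `f' = g` (it is a log-sum-exp) and
`g` is a logistic function, so `g' = g (1 - g)`. Hence `(f - g)' = g - g (1 - g) = g² > 0`. -/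

open Real

noncomputable def deltaEnergyScore (b s : ℝ) : ℝ := log ((exp s + b) / (1 + b))

noncomputable def mcmScore (b s : ℝ) : ℝ := exp s / (exp s + b)

section

variable {b : ℝ}

lemma exp_add_pos (hb : 0 ≤ b) (s : ℝ) : 0 < exp s + b := by positivity

lemma mcmScore_pos (hb : 0 ≤ b) (s : ℝ) : 0 < mcmScore b s :=
  div_pos (exp_pos s) (exp_add_pos hb s)

lemma hasDerivAt_deltaEnergyScore (hb : 0 ≤ b) (s : ℝ) :
    HasDerivAt (deltaEnergyScore b) (mcmScore b s) s := by
  have hquot : HasDerivAt (fun s => (exp s + b) / (1 + b)) (exp s / (1 + b)) s :=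
    ((hasDerivAt_exp s).add_const b).div_const (1 + b)
  refine (hquot.log (div_pos (exp_add_pos hb s) (by positivity)).ne').congr_deriv ?_
  have hb1 : 1 + b ≠ 0 := by positivity
  unfold mcmScore
  field_simp [(exp_add_pos hb s).ne']

lemma hasDerivAt_mcmScore (hb : 0 ≤ b) (s : ℝ) :
    HasDerivAt (mcmScore b) (mcmScore b s * (1 - mcmScore b s)) s := by
  have hne := (exp_add_pos hb s).ne'
  refine ((hasDerivAt_exp s).div ((hasDerivAt_exp s).add_const b) hne).congr_deriv ?_
  unfold mcmScore
  field_simp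

lemma hasDerivAt_deltaEnergyScore_sub_mcmScore (hb : 0 ≤ b) (s : ℝ) :
    HasDerivAt (fun s => deltaEnergyScore b s - mcmScore b s) (mcmScore b s ^ 2) s := by
  refine ((hasDerivAt_deltaEnergyScore hb s).sub (hasDerivAt_mcmScore hb s)).congr_deriv ?_
  ring

lemma strictMono_deltaEnergyScore_sub_mcmScore (hb : 0 ≤ b) :
    StrictMono (fun s => deltaEnergyScore b s - mcmScore b s) :=
  strictMono_of_deriv_pos fun s => by
    rw [(hasDerivAt_deltaEnergyScore_sub_mcmScore hb s).deriv]
    exact pow_pos (mcmScore_pos hb s) 2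

lemma mcmScore_sub_lt_deltaEnergyScore_sub (hb : 0 ≤ b) {s t : ℝ} (hst : s < t) :
    mcmScore b t - mcmScore b s < deltaEnergyScore b t - deltaEnergyScore b s := by
  linarith [strictMono_deltaEnergyScore_sub_mcmScore hb hst]

end

theorem deltaEnergy_gap_exceeds_MCM_gap (b : ℝ) (hb : 0 < b) :
    StrictMono (fun s : ℝ =>
      Real.log ((Real.exp s + b) / (1 + b)) - Real.exp s / (Real.exp s + b)) ∧
    ∀ s_OOD s_ID : ℝ, s_OOD < s_ID →
      Real.exp s_ID / (Real.exp s_ID + b) - Real.exp s_OOD / (Real.exp s_OOD + b) <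
        Real.log ((Real.exp s_ID + b) / (1 + b)) -
          Real.log ((Real.exp s_OOD + b) / (1 + b)) :=
  ⟨strictMono_deltaEnergyScore_sub_mcmScore hb.le,
    fun _ _ h => mcmScore_sub_lt_deltaEnergyScore_sub hb.le h⟩
end

section
/- Let s ≥ s̃ be real numbers and B > 0 with B ≥ e^s. If e^s ≤ 2·e^{s̃}, then log(1 + (e^s − e^{s̃})/(B − e^s + e^{s̃})) ≤ e^s/B. -/
/-! Put `a = e^s`, `b = e^s̃` and `t = (a - b) / (B - a + b)`. Since `log (1 + t) ≤ t`, it suffices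
that `t ≤ a / B`, which after clearing denominators is `a (a - b) ≤ b B`; this follows from
`a - b ≤ b` and `a ≤ B`. -/

open Real

lemma sub_div_sub_add_le_div {a b B : ℝ} (ha : 0 < a) (hb : 0 < b) (haB : a ≤ B)
    (hab : a ≤ 2 * b) : (a - b) / (B - a + b) ≤ a / B := by
  rw [div_le_div_iff₀ (by linarith) (by linarith)]
  have key : a * (a - b) ≤ b * B :=
    calc a * (a - b) ≤ a * b := mul_le_mul_of_nonneg_left (by linarith) ha.le
      _ ≤ B * b := mul_le_mul_of_nonneg_right haB hb.le
      _ = b * B := mul_comm B b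
  linarith

lemma log_one_add_le_self {t : ℝ} (ht : -1 < t) : log (1 + t) ≤ t := by
  linarith [log_le_sub_one_of_pos (by linarith : 0 < 1 + t)]

theorem deltaEnergy_le_MCM_general (s st B : ℝ)
    (hBe : Real.exp s ≤ B) (hcond : Real.exp s ≤ 2 * Real.exp st) :
    Real.log (1 + (Real.exp s - Real.exp st) / (B - Real.exp s + Real.exp st)) ≤
      Real.exp s / B := by
  have hD : 0 < B - exp s + exp st := by linarith [exp_pos st]
  have ht : -1 < (exp s - exp st) / (B - exp s + exp st) := by
    rw [lt_div_iff₀ hD]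
    linarith [exp_pos s]
  exact (log_one_add_le_self ht).trans
    (sub_div_sub_add_le_div (exp_pos s) (exp_pos st) hBe hcond)

theorem deltaEnergy_le_MCM (s st B : ℝ) (hss : st ≤ s) (hB : 0 < B)
    (hBe : Real.exp s ≤ B) (hcond : Real.exp s ≤ 2 * Real.exp st) :
    Real.log (1 + (Real.exp s - Real.exp st) / (B - Real.exp s + Real.exp st)) ≤
      Real.exp s / B :=
  deltaEnergy_le_MCM_general s st B hBe hcond
end
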